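/- arXiv:2601.03318 — 4 statements merged into one kernel-verified Lean document; each statement's English description precedes it below -/
import Mathlib

section
/- Let 0 < α < 1 and c > 0. The Caputo fractional derivative of order α (lower terminal 0) of f(s) = (s − c)², evaluated at the minimizer u = c of f, equals 2c^(2−α)·(1/Γ(3−α) − 1/Γ(2−α)) and is nonzero. Hence the minimizer of f is not an equilibrium point of the fractional gradient descent dynamics du/dt = −λ · ( *_0D^α_u f )(u). -/
open Real

lemma one_div_Gamma_add_one_sub_one_div_Gamma (s : ℝ) :
    1 / Gamma (s + 1) - 1 / Gamma s = (1 - s) / Gamma (s + 1) := by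
  rcases eq_or_ne s 0 with rfl | hs
  · simp
  rcases eq_or_ne (Gamma s) 0 with hΓ | hΓ
  · simp [Gamma_add_one hs, hΓ]
  rw [Gamma_add_one hs]
  field_simp

lemma two_mul_rpow_div_Gamma_sub_at_self (α : ℝ) {c : ℝ} (hc : c ≠ 0) :
    2 * c ^ (2 - α) / Gamma (3 - α) - 2 * c * c ^ (1 - α) / Gamma (2 - α)
      = 2 * c ^ (2 - α) * (1 / Gamma (3 - α) - 1 / Gamma (2 - α)) := by
  have hpow : c * c ^ (1 - α) = c ^ (2 - α) := by
    rw [show 2 - α = (1 - α) + 1 by ring, rpow_add_one hc, mul_comm]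
  rw [mul_assoc 2 c, hpow]
  ring

theorem caputo_deriv_sq_shift_at_minimizer_general (α c : ℝ) (hα1 : α < 1)
    (hc : 0 < c) :
    2 * c ^ (2 - α) / Real.Gamma (3 - α) - 2 * c * c ^ (1 - α) / Real.Gamma (2 - α)
      = 2 * c ^ (2 - α) * (1 / Real.Gamma (3 - α) - 1 / Real.Gamma (2 - α)) ∧
    2 * c ^ (2 - α) / Real.Gamma (3 - α) - 2 * c * c ^ (1 - α) / Real.Gamma (2 - α) ≠ 0 ∧
    ∀ l : ℝ, 0 < l →
      -l * (2 * c ^ (2 - α) / Real.Gamma (3 - α)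
        - 2 * c * c ^ (1 - α) / Real.Gamma (2 - α)) ≠ 0 := by
  have hval := two_mul_rpow_div_Gamma_sub_at_self α hc.ne'
  have hgap : 1 / Gamma (3 - α) - 1 / Gamma (2 - α) = (α - 1) / Gamma (3 - α) := by
    rw [show 3 - α = (2 - α) + 1 by ring, one_div_Gamma_add_one_sub_one_div_Gamma]
    ring_nf
  have hne : 2 * c ^ (2 - α) / Gamma (3 - α) - 2 * c * c ^ (1 - α) / Gamma (2 - α) ≠ 0 := by
    rw [hval, hgap]
    have hΓ : 0 < Gamma (3 - α) := Gamma_pos_of_pos (by linarith)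
    have hcpow : 0 < c ^ (2 - α) := rpow_pos_of_pos hc _
    exact mul_ne_zero (by positivity) (div_ne_zero (by linarith) hΓ.ne')
  exact ⟨hval, hne, fun l hl => mul_ne_zero (neg_ne_zero.2 hl.ne') hne⟩

/-- For `0 < α < 1` and `c > 0`, the Caputo fractional derivative of order `α`
(lower terminal `0`) of `f s = (s - c)^2` evaluated at the minimizer `u = c` equals
`2 c^(2-α) (1/Γ(3-α) - 1/Γ(2-α))` and is nonzero; hence the minimizer is not an
equilibrium point of the dynamics `du/dt = -λ · (*D^α f)(u)`. -/
theorem caputo_deriv_sq_shift_at_minimizer (α c : ℝ) (hα0 : 0 < α) (hα1 : α < 1)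
    (hc : 0 < c) :
    2 * c ^ (2 - α) / Real.Gamma (3 - α) - 2 * c * c ^ (1 - α) / Real.Gamma (2 - α)
      = 2 * c ^ (2 - α) * (1 / Real.Gamma (3 - α) - 1 / Real.Gamma (2 - α)) ∧
    2 * c ^ (2 - α) / Real.Gamma (3 - α) - 2 * c * c ^ (1 - α) / Real.Gamma (2 - α) ≠ 0 ∧
    ∀ l : ℝ, 0 < l →
      -l * (2 * c ^ (2 - α) / Real.Gamma (3 - α)
        - 2 * c * c ^ (1 - α) / Real.Gamma (2 - α)) ≠ 0 :=
  caputo_deriv_sq_shift_at_minimizer_general α c hα1 hc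
end

section
/- Let 0 < α < 1, c ∈ ℝ, and λ > 0. For every u > 0 with u ≠ c(2−α), one has −2λ·(u − c(2−α)) · (2u^(2−α)/Γ(3−α) − 2c·u^(1−α)/Γ(2−α)) = −(4λ/Γ(3−α))·u^(1−α)·(u − c(2−α))² < 0. Consequently, along the fractional gradient flow du/dt = −λ·( *_0D^α_u f )(u) for f(s) = (s−c)², the Lyapunov function V(u) = (u − c(2−α))² is strictly decreasing at every u > 0 with u ≠ c(2−α). -/
/-- For `0 < α < 1`, `λ > 0` and `u > 0` with `u ≠ c (2 - α)`, the time derivative of the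
Lyapunov function `V u = (u - c (2 - α))^2` along the fractional gradient flow
`du/dt = -λ (*D^α f)(u)` of `f s = (s - c)^2` is
`-(4λ/Γ(3-α)) u^(1-α) (u - c(2-α))^2 < 0`. -/
theorem fgdm_lyapunov_decrease (α c l : ℝ) (hα0 : 0 < α) (hα1 : α < 1) (hl : 0 < l) :
    ∀ u : ℝ, 0 < u → u ≠ c * (2 - α) →
      (-2 * l * (u - c * (2 - α)) *
          (2 * u ^ (2 - α) / Real.Gamma (3 - α) - 2 * c * u ^ (1 - α) / Real.Gamma (2 - α))
        = -(4 * l / Real.Gamma (3 - α)) * u ^ (1 - α) * (u - c * (2 - α)) ^ 2) ∧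
      -(4 * l / Real.Gamma (3 - α)) * u ^ (1 - α) * (u - c * (2 - α)) ^ 2 < 0 := by
  intro u hu hne
  have hΓ2 : 0 < Real.Gamma (2 - α) := Real.Gamma_pos_of_pos (by linarith)
  have hΓ3 : 0 < Real.Gamma (3 - α) := Real.Gamma_pos_of_pos (by linarith)
  have hG : Real.Gamma (3 - α) = (2 - α) * Real.Gamma (2 - α) := by
    have := Real.Gamma_add_one (s := 2 - α) (by nlinarith)
    rw [show (3 : ℝ) - α = 2 - α + 1 by ring, this]
  have hpow : u ^ (2 - α) = u ^ (1 - α) * u := by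
    rw [show (2 : ℝ) - α = 1 - α + 1 by ring, Real.rpow_add hu, Real.rpow_one]
  have hup : 0 < u ^ (1 - α) := Real.rpow_pos_of_pos hu _
  constructor
  · rw [hpow, hG]
    have h2 : (2 : ℝ) - α ≠ 0 := by linarith
    field_simp
    ring
  · have hsq : 0 < (u - c * (2 - α)) ^ 2 := by
      have := sub_ne_zero.mpr hne
      positivity
    have : 0 < 4 * l / Real.Gamma (3 - α) := div_pos (by linarith) hΓ3
    nlinarith [mul_pos (mul_pos this hup) hsq]
end

section
/- Let 0 < α < 1, c ∈ ℝ, and h > 0. The Caputo fractional derivative of order α with fixed memory length h of f(s) = (s − c)², namely (2/Γ(1−α))·[ (u − c)·h^(1−α)/(1−α) − h^(2−α)/(2−α) ], vanishes if and only if u = c + h(1−α)/(2−α); moreover this equilibrium point tends to the minimizer c of f as h → 0⁺. -/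
open Real

lemma caputo_fixed_memory_sq_factor {α h : ℝ} (hα1 : α < 1) (hh : 0 < h) (c u : ℝ) :
    (u - c) * h ^ (1 - α) / (1 - α) - h ^ (2 - α) / (2 - α) =
      h ^ (1 - α) / (1 - α) * (u - (c + h * (1 - α) / (2 - α))) := by
  have h1α : 1 - α ≠ 0 := by linarith
  have h2α : 2 - α ≠ 0 := by linarith
  rw [show 2 - α = (1 - α) + 1 by ring, rpow_add_one hh.ne']
  field_simp
  ring

theorem caputo_fixed_memory_zero_iff_general (α c : ℝ) (hα1 : α < 1) :
    (∀ h : ℝ, 0 < h → ∀ u : ℝ,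
      ((2 / Real.Gamma (1 - α)) *
          ((u - c) * h ^ (1 - α) / (1 - α) - h ^ (2 - α) / (2 - α)) = 0
        ↔ u = c + h * (1 - α) / (2 - α))) ∧
    Filter.Tendsto (fun h : ℝ => c + h * (1 - α) / (2 - α))
      (nhdsWithin 0 (Set.Ioi 0)) (nhds c) := by
  have h1α : 0 < 1 - α := by linarith
  refine ⟨fun h hh u => ?_, ?_⟩
  · have hK : 2 / Gamma (1 - α) ≠ 0 := (div_pos two_pos (Gamma_pos_of_pos h1α)).ne'
    have hp : h ^ (1 - α) / (1 - α) ≠ 0 := (div_pos (rpow_pos_of_pos hh _) h1α).ne'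
    rw [caputo_fixed_memory_sq_factor hα1 hh, mul_eq_zero, mul_eq_zero, sub_eq_zero]
    simp only [hK, hp, false_or]
  · have hcont : Continuous fun h : ℝ => c + h * (1 - α) / (2 - α) := by fun_prop
    exact (hcont.tendsto' 0 c (by simp)).mono_left nhdsWithin_le_nhds

/-- The fixed-memory-length Caputo derivative of order `α ∈ (0,1)` of `f s = (s - c)^2`,
namely `(2/Γ(1-α)) [ (u - c) h^(1-α)/(1-α) - h^(2-α)/(2-α) ]`, vanishes iff
`u = c + h (1-α)/(2-α)`, and this equilibrium point tends to the minimizer `c` as `h → 0⁺`. -/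
theorem caputo_fixed_memory_zero_iff (α c : ℝ) (hα0 : 0 < α) (hα1 : α < 1) :
    (∀ h : ℝ, 0 < h → ∀ u : ℝ,
      ((2 / Real.Gamma (1 - α)) *
          ((u - c) * h ^ (1 - α) / (1 - α) - h ^ (2 - α) / (2 - α)) = 0
        ↔ u = c + h * (1 - α) / (2 - α))) ∧
    Filter.Tendsto (fun h : ℝ => c + h * (1 - α) / (2 - α))
      (nhdsWithin 0 (Set.Ioi 0)) (nhds c) :=
  caputo_fixed_memory_zero_iff_general α c hα1
end

section
/- Let 0 < α < 1, let u : [0,T] → ℝ be continuously differentiable, let u* ∈ ℝ, and set V(t) = (1/2)(u(t) − u*)². Then for every t ∈ (0,T], the Caputo fractional derivative of V of order α is bounded by (u(t) − u*) times the Caputo fractional derivative of u of order α: (1/Γ(1−α)) ∫₀ᵗ V′(s)(t − s)^(−α) ds ≤ (u(t) − u*) · (1/Γ(1−α)) ∫₀ᵗ u′(s)(t − s)^(−α) ds. -/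
/-!
Since `V' = (u - u*) u'`, the difference of the two sides is `1 / Γ(1 - α)` times
`∫₀ᵗ (u t - u s) u' s (t - s)^(-α) ds`. Integrating by parts against
`W s = (u t - u s)² / 2` turns this into `W 0 t^(-α) + α ∫₀ᵗ W s (t - s)^(-α-1) ds ≥ 0`.
The kernel `(t - s)^(-α-1)` is not integrable at `t`, so the integration by parts is done on
`[0, x]` and `x → t⁻`; the boundary term `W x (t - x)^(-α) = O((t - x)^(2-α))` vanishes in
the limit.
-/

open Set Filter Topology MeasureTheory intervalIntegral Asymptotics

lemma intervalIntegrable_sub_rpow {r : ℝ} (hr : -1 < r) (a t : ℝ) :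
    IntervalIntegrable (fun s => (t - s) ^ r) volume a t := by
  simpa using ((intervalIntegrable_rpow' (a := 0) (b := t - a) hr).comp_sub_left t).symm

section CaputoKernel

variable {u u' : ℝ → ℝ} {a t α : ℝ}

lemma neg_half_sq_sub_mul_rpow_le_integral {x : ℝ} (hα : 0 ≤ α) (hax : a ≤ x) (hxt : x < t)
    (hderiv : ∀ s ∈ Icc a x, HasDerivAt u (u' s) s) (hcont : ContinuousOn u' (Icc a x)) :
    -((u t - u x) ^ 2 / 2 * (t - x) ^ (-α)) ≤
      ∫ s in a..x, (u t - u s) * u' s * (t - s) ^ (-α) := by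
  rw [← uIcc_of_le hax] at hderiv hcont
  have hpos : ∀ s ∈ uIcc a x, 0 < t - s := fun s hs => by
    rw [uIcc_of_le hax] at hs; linarith [hs.2]
  have hucont : ContinuousOn u (uIcc a x) := fun s hs =>
    (hderiv s hs).continuousAt.continuousWithinAt
  have hV : ∀ s ∈ uIcc a x,
      HasDerivAt (fun s => (u t - u s) ^ 2 / 2) (-((u t - u s) * u' s)) s := fun s hs => by
    refine ((((hderiv s hs).const_sub (u t)).fun_pow 2).div_const 2).congr_deriv ?_
    push_cast
    ring
  have hk : ∀ s ∈ uIcc a x,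
      HasDerivAt (fun s => (t - s) ^ (-α)) (α * (t - s) ^ (-α - 1)) s := fun s hs => by
    convert ((hasDerivAt_id' s).const_sub t).rpow_const (p := -α) (Or.inl (hpos s hs).ne') using 1
    ring
  have hV'int : IntervalIntegrable (fun s => -((u t - u s) * u' s)) volume a x :=
    (((continuousOn_const.sub hucont).mul hcont).neg).intervalIntegrable
  have hk'int : IntervalIntegrable (fun s => α * (t - s) ^ (-α - 1)) volume a x :=
    (continuousOn_const.mul (ContinuousOn.rpow_const (by fun_prop)
      fun s hs => Or.inl (hpos s hs).ne')).intervalIntegrable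
  have hibp := integral_mul_deriv_eq_deriv_mul hV hk hV'int hk'int
  have hrest : 0 ≤ ∫ s in a..x, (u t - u s) ^ 2 / 2 * (α * (t - s) ^ (-α - 1)) :=
    integral_nonneg hax fun s hs => by
      have := Real.rpow_nonneg (y := -α - 1) (hpos s (Icc_subset_uIcc hs)).le
      positivity
  have hstart : 0 ≤ (u t - u a) ^ 2 / 2 * (t - a) ^ (-α) := by
    have := Real.rpow_nonneg (y := -α) (hpos a left_mem_uIcc).le
    positivity
  simp only [neg_mul, intervalIntegral.integral_neg] at hibp
  linarith

lemma tendsto_half_sq_sub_mul_rpow_nhdsLT {u't : ℝ} (hu : HasDerivAt u u't t) (hα : α < 2) :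
    Tendsto (fun x => (u t - u x) ^ 2 / 2 * (t - x) ^ (-α)) (𝓝[<] t) (𝓝 0) := by
  have hO : (fun x => (u t - u x) ^ 2 / 2 * (t - x) ^ (-α)) =O[𝓝[<] t]
      fun x => (t - x) ^ (2 - α) := by
    have hlin : (fun x => u x - u t) =O[𝓝[<] t] fun x => x - t :=
      hu.isBigO_sub.mono nhdsWithin_le_nhds
    refine ((((hlin.pow 2).const_mul_left (1 / 2)).mul
      (isBigO_refl (fun x => (t - x) ^ (-α)) _))).congr' ?_ ?_
    · exact Eventually.of_forall fun x => by ring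
    · filter_upwards [self_mem_nhdsWithin] with x (hx : x < t)
      rw [show 2 - α = 2 + -α by ring, Real.rpow_add (by linarith), Real.rpow_two]
      ring
  refine hO.trans_tendsto (tendsto_nhdsWithin_of_tendsto_nhds ?_)
  have hcont : Continuous fun x => (t - x) ^ (2 - α) :=
    (continuous_const.sub continuous_id).rpow_const fun _ => Or.inr (by linarith)
  simpa [Real.zero_rpow (by linarith : (2 : ℝ) - α ≠ 0)] using hcont.tendsto t

lemma integral_sub_mul_deriv_mul_rpow_nonneg (hα0 : 0 ≤ α) (hα1 : α < 1) (hat : a < t)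
    (hderiv : ∀ s ∈ Icc a t, HasDerivAt u (u' s) s) (hcont : ContinuousOn u' (Icc a t)) :
    0 ≤ ∫ s in a..t, (u t - u s) * u' s * (t - s) ^ (-α) := by
  have hucont : ContinuousOn u (Icc a t) := fun s hs =>
    (hderiv s hs).continuousAt.continuousWithinAt
  have hint : IntervalIntegrable (fun s => (u t - u s) * u' s * (t - s) ^ (-α)) volume a t :=
    (intervalIntegrable_sub_rpow (by linarith) a t).continuousOn_mul
      (by rw [uIcc_of_le hat.le]; exact (continuousOn_const.sub hucont).mul hcont)
  have hprimitive : Tendsto (fun x => ∫ s in a..x, (u t - u s) * u' s * (t - s) ^ (-α))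
      (𝓝[<] t) (𝓝 (∫ s in a..t, (u t - u s) * u' s * (t - s) ^ (-α))) :=
    ((continuousOn_primitive_interval' hint left_mem_uIcc).continuousWithinAt
      right_mem_uIcc).tendsto.mono_left
        (nhdsWithin_le_of_mem (by rw [uIcc_of_le hat.le]; exact Icc_mem_nhdsLT hat))
  have hboundary := (tendsto_half_sq_sub_mul_rpow_nhdsLT
    (hderiv t (right_mem_Icc.2 hat.le)) (by linarith : α < 2)).neg
  rw [neg_zero] at hboundary
  refine le_of_tendsto_of_tendsto hboundary hprimitive ?_
  filter_upwards [Ioo_mem_nhdsLT hat] with x hx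
  have hsub : Icc a x ⊆ Icc a t := Icc_subset_Icc_right hx.2.le
  exact neg_half_sq_sub_mul_rpow_le_integral hα0 hx.1.le hx.2
    (fun s hs => hderiv s (hsub hs)) (hcont.mono hsub)

theorem integral_sub_mul_deriv_mul_rpow_le (c : ℝ) (hα0 : 0 ≤ α) (hα1 : α < 1) (hat : a < t)
    (hderiv : ∀ s ∈ Icc a t, HasDerivAt u (u' s) s) (hcont : ContinuousOn u' (Icc a t)) :
    ∫ s in a..t, (u s - c) * u' s * (t - s) ^ (-α) ≤
      (u t - c) * ∫ s in a..t, u' s * (t - s) ^ (-α) := by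
  have hucont : ContinuousOn u (uIcc a t) := by
    rw [uIcc_of_le hat.le]
    exact fun s hs => (hderiv s hs).continuousAt.continuousWithinAt
  have hcont' : ContinuousOn u' (uIcc a t) := by rwa [uIcc_of_le hat.le]
  have hker := intervalIntegrable_sub_rpow (r := -α) (by linarith) a t
  have hlhs : IntervalIntegrable (fun s => (u s - c) * u' s * (t - s) ^ (-α)) volume a t :=
    hker.continuousOn_mul ((hucont.sub continuousOn_const).mul hcont')
  have hrhs := (hker.continuousOn_mul hcont').const_mul (u t - c)
  rw [← intervalIntegral.integral_const_mul, ← sub_nonneg,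
    ← intervalIntegral.integral_sub hrhs hlhs]
  exact (integral_sub_mul_deriv_mul_rpow_nonneg hα0 hα1 hat hderiv hcont).trans_eq
    (integral_congr fun s _ => by ring)

end CaputoKernel

theorem caputo_deriv_half_square_le_general (α T : ℝ) (hα0 : 0 < α) (hα1 : α < 1)
    (u u' : ℝ → ℝ) (ustar : ℝ)
    (hderiv : ∀ s ∈ Set.Icc (0:ℝ) T, HasDerivAt u (u' s) s)
    (hcont : ContinuousOn u' (Set.Icc (0:ℝ) T)) :
    ∀ t ∈ Set.Ioc (0:ℝ) T,
      (1 / Real.Gamma (1 - α)) *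
          ∫ s in (0:ℝ)..t, ((u s - ustar) * u' s) * (t - s) ^ (-α)
        ≤ (u t - ustar) *
            ((1 / Real.Gamma (1 - α)) * ∫ s in (0:ℝ)..t, u' s * (t - s) ^ (-α)) := by
  rintro t ⟨ht0, htT⟩
  have hsub : Icc 0 t ⊆ Icc 0 T := Icc_subset_Icc_right htT
  have hΓ : 0 ≤ 1 / Real.Gamma (1 - α) :=
    (one_div_pos.2 (Real.Gamma_pos_of_pos (by linarith))).le
  rw [mul_left_comm]
  exact mul_le_mul_of_nonneg_left (integral_sub_mul_deriv_mul_rpow_le ustar hα0.le hα1 ht0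
    (fun s hs => hderiv s (hsub hs)) (hcont.mono hsub)) hΓ

/-- For `0 < α < 1` and a continuously differentiable `u : [0,T] → ℝ`, with
`V t = (1/2)(u t - u*)²` (so `V′ s = (u s - u*) u′ s`), the Caputo fractional derivative
of order `α` of `V` is bounded by `(u t - u*)` times that of `u`, for every `t ∈ (0,T]`. -/
theorem caputo_deriv_half_square_le (α T : ℝ) (hα0 : 0 < α) (hα1 : α < 1) (hT : 0 < T)
    (u u' : ℝ → ℝ) (ustar : ℝ)
    (hderiv : ∀ s ∈ Set.Icc (0:ℝ) T, HasDerivAt u (u' s) s)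
    (hcont : ContinuousOn u' (Set.Icc (0:ℝ) T)) :
    ∀ t ∈ Set.Ioc (0:ℝ) T,
      (1 / Real.Gamma (1 - α)) *
          ∫ s in (0:ℝ)..t, ((u s - ustar) * u' s) * (t - s) ^ (-α)
        ≤ (u t - ustar) *
            ((1 / Real.Gamma (1 - α)) * ∫ s in (0:ℝ)..t, u' s * (t - s) ^ (-α)) :=
  caputo_deriv_half_square_le_general α T hα0 hα1 u u' ustar hderiv hcont
end
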